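/- Suppose M_d(β) is positive semidefinite, recursively generated, and its column relations are generated entirely by X^n = p(X,Y) and Y^m = q(X,Y) via recursiveness and linearity, where q(x,y) = Σ_{u+v ≤ m, v < m} b_{uv} x^u y^v. Let B(d+1) be a block with rows indexed by the monomials of degree ≤ d and columns by the monomials of degree d+1 such that (M_d B(d+1)) has moment-matrix block structure (entries of total index degree ≤ 2d equal the corresponding β_{ij}, and the degree-d row block is Hankel) and the columns of (M_d B(d+1)) satisfy every relation (x^a y^b (x^n − p))(X,Y) = 0 and (x^a y^b (y^m − q))(X,Y) = 0 of degree ≤ d+1. Then for all i, j ≥ 0 with i + j ≤ d + 1 and all f, g ≥ 0 with m + f + g ≤ d, the entries of (M_d B(d+1)) satisfy ⟨X^iY^j, X^fY^{m+g}⟩ = Σ_{u+v ≤ m, v < m} b_{uv} ⟨X^iY^j, X^{u+f}Y^{v+g}⟩, where ⟨X^iY^j, X^kY^l⟩ denotes the entry in the row indexed by x^k y^l and the column indexed by x^i y^j. -/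

import Mathlib

open Finset Matrix

noncomputable section

/-- Monomial indices of degree at most `d` (the monomial `x^i y^j` is the pair `(i,j)`). -/
abbrev Idx (d : ℕ) : Type := {ij : ℕ × ℕ // ij.1 + ij.2 ≤ d}

/-- Monomial indices of degree exactly `e`. -/
abbrev Jdx (e : ℕ) : Type := {ij : ℕ × ℕ // ij.1 + ij.2 = e}

instance (d : ℕ) : Fintype (Idx d) :=
  Fintype.subtype
    ((Finset.range (d + 1) ×ˢ Finset.range (d + 1)).filter fun ij => ij.1 + ij.2 ≤ d)
    (by
      rintro ⟨a, b⟩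
      simp only [Finset.mem_filter, Finset.mem_product, Finset.mem_range]
      omega)

instance (e : ℕ) : Fintype (Jdx e) :=
  Fintype.subtype
    ((Finset.range (e + 1) ×ˢ Finset.range (e + 1)).filter fun ij => ij.1 + ij.2 = e)
    (by
      rintro ⟨a, b⟩
      simp only [Finset.mem_filter, Finset.mem_product, Finset.mem_range]
      omega)

/-- The moment matrix `M_d(β)`: rows and columns are indexed by monomials of degree ≤ d,
with entry in row `(i,j)`, column `(k,l)` equal to `β (i+k) (j+l)`. -/
def momentMatrix (d : ℕ) (β : ℕ → ℕ → ℝ) : Matrix (Idx d) (Idx d) ℝ :=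
  Matrix.of fun r c => β (r.1.1 + c.1.1) (r.1.2 + c.1.2)

/-- The coefficient vector (truncated to degree ≤ d) of the polynomial with
coefficient function `a`. -/
def coeffVec (d : ℕ) (a : ℕ → ℕ → ℝ) : Idx d → ℝ := fun c => a c.1.1 c.1.2

/-- `p(X,Y)`: the linear combination of the columns of `M_d(β)` given by the
coefficient function `a` of `p`. -/
def polyCol (d : ℕ) (β : ℕ → ℕ → ℝ) (a : ℕ → ℕ → ℝ) : Idx d → ℝ :=
  momentMatrix d β *ᵥ coeffVec d a

/-- Coefficient function of the monomial `x^u y^v`. -/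
def monoC (u v : ℕ) : ℕ → ℕ → ℝ := fun k l => if k = u ∧ l = v then 1 else 0

/-- Coefficient function of `x^u y^v * p`, where `p` has coefficient function `a`. -/
def shiftC (u v : ℕ) (a : ℕ → ℕ → ℝ) : ℕ → ℕ → ℝ :=
  fun k l => if u ≤ k ∧ v ≤ l then a (k - u) (l - v) else 0

/-- The polynomial with coefficient function `a` has (total) degree at most `D`. -/
def DegLE (a : ℕ → ℕ → ℝ) (D : ℕ) : Prop := ∀ k l : ℕ, D < k + l → a k l = 0

/-- Coefficient function of the product of two polynomials. -/
def cMul (a b : ℕ → ℕ → ℝ) : ℕ → ℕ → ℝ := fun k l =>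
  ∑ i ∈ Finset.range (k + 1), ∑ j ∈ Finset.range (l + 1), a i j * b (k - i) (l - j)

/-- `M_d(β)` is recursively generated: whenever `p, q, pq` all have degree ≤ d and
`p(X,Y) = 0`, also `(pq)(X,Y) = 0`. -/
def RecursivelyGenerated (d : ℕ) (β : ℕ → ℕ → ℝ) : Prop :=
  ∀ a b : ℕ → ℕ → ℝ, DegLE a d → DegLE b d → DegLE (cMul a b) d →
    polyCol d β a = 0 → polyCol d β (cMul a b) = 0

/-- The column relations of `M_d(β)` are generated entirely by `X^n = p(X,Y)` and
`Y^m = q(X,Y)` via recursiveness and linearity. -/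
def GeneratedBy (d n m : ℕ) (β p q : ℕ → ℕ → ℝ) : Prop :=
  1 ≤ n ∧ n ≤ d ∧ 1 ≤ m ∧ m ≤ d ∧
  DegLE p (n - 1) ∧ DegLE q m ∧ q 0 m = 0 ∧
  polyCol d β (monoC n 0 - p) = 0 ∧
  polyCol d β (monoC 0 m - q) = 0 ∧
  ∀ v : Idx d → ℝ,
    momentMatrix d β *ᵥ v = 0 ↔
      v ∈ Submodule.span ℝ
        {w : Idx d → ℝ |
          (∃ i j : ℕ, n + i + j ≤ d ∧ w = coeffVec d (shiftC i j (monoC n 0 - p))) ∨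
          (∃ k l : ℕ, m + k + l ≤ d ∧ w = coeffVec d (shiftC k l (monoC 0 m - q)))}

/-- The `(row (k,l), column (i,j))` entry of the augmented matrix `(M_d  B(d+1))`,
where rows have degree ≤ d and columns degree ≤ d+1 (value 0 outside this range). -/
def augEntry (d : ℕ) (β : ℕ → ℕ → ℝ) (B : Matrix (Idx d) (Jdx (d + 1)) ℝ)
    (k l i j : ℕ) : ℝ :=
  if hr : k + l ≤ d then
    if i + j ≤ d then β (k + i) (l + j)
    else if hc : i + j = d + 1 then B ⟨(k, l), hr⟩ ⟨(i, j), hc⟩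
    else 0
  else 0

/-- The column relation `w(X,Y) = 0` holds among the columns of `(M_d  B(d+1))`. -/
def AugRel (d : ℕ) (β : ℕ → ℕ → ℝ) (B : Matrix (Idx d) (Jdx (d + 1)) ℝ)
    (w : ℕ → ℕ → ℝ) : Prop :=
  ∀ k l : ℕ, k + l ≤ d →
    ∑ c : Idx (d + 1), w c.1.1 c.1.2 * augEntry d β B k l c.1.1 c.1.2 = 0

/-- `(M_d  B(d+1))` is recursively generated for polynomials of degree ≤ d+1. -/
def AugRecGen (d : ℕ) (β : ℕ → ℕ → ℝ) (B : Matrix (Idx d) (Jdx (d + 1)) ℝ) : Prop :=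
  ∀ a b : ℕ → ℕ → ℝ, DegLE a (d + 1) → DegLE b (d + 1) → DegLE (cMul a b) (d + 1) →
    AugRel d β B a → AugRel d β B (cMul a b)

/-!
Because of the block structure, the entry `⟨X^iY^j, X^kY^l⟩` of `(M_d  B(d+1))` depends only on
`(k + i, l + j)`. An entry in row `X^fY^{m+g}` can therefore be moved to a row `X^kY^l` and a
column `X^aY^{m+b}` with `m + a + b ≤ d + 1`, where the column relation
`(x^a y^b (y^m - q))(X,Y) = 0` expands it along `q`; moving each resulting entry back gives the
claim.
-/

/-- `(M_d  B(d+1))` has moment-matrix block structure. -/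
def IsMomentBlock (d : ℕ) (β : ℕ → ℕ → ℝ) (B : Matrix (Idx d) (Jdx (d + 1)) ℝ) : Prop :=
  (∀ (r : Idx d) (c : Jdx (d + 1)), r.1.1 + r.1.2 ≤ d - 1 →
    B r c = β (r.1.1 + c.1.1) (r.1.2 + c.1.2)) ∧
  ∀ (r r' : Idx d) (c c' : Jdx (d + 1)),
    r.1.1 + r.1.2 = d → r'.1.1 + r'.1.2 = d →
    r.1.1 + c.1.1 = r'.1.1 + c'.1.1 → r.1.2 + c.1.2 = r'.1.2 + c'.1.2 →
    B r c = B r' c'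

section CoeffSums

variable {D : ℕ}

theorem sum_monoC_mul {u v : ℕ} (h : u + v ≤ D) (E : ℕ → ℕ → ℝ) :
    ∑ c : Idx D, monoC u v c.1.1 c.1.2 * E c.1.1 c.1.2 = E u v := by
  rw [Finset.sum_eq_single_of_mem (⟨(u, v), h⟩ : Idx D) (Finset.mem_univ _)]
  · simp [monoC]
  · rintro ⟨⟨x, y⟩, _⟩ - hne
    have : ¬(x = u ∧ y = v) := by
      rintro ⟨rfl, rfl⟩
      exact hne rfl
    simp [monoC, this]

theorem sum_shiftC_mul {M a b : ℕ} (hM : M + a + b ≤ D) {q : ℕ → ℕ → ℝ} (hq : DegLE q M)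
    (E : ℕ → ℕ → ℝ) :
    ∑ c : Idx D, shiftC a b q c.1.1 c.1.2 * E c.1.1 c.1.2 =
      ∑ c : Idx M, q c.1.1 c.1.2 * E (c.1.1 + a) (c.1.2 + b) := by
  symm
  refine Fintype.sum_of_injective
    (fun c : Idx M => (⟨(c.1.1 + a, c.1.2 + b), by have := c.2; omega⟩ : Idx D))
    (fun c c' h => by simp_all [Subtype.ext_iff, Prod.ext_iff]) _ _ ?_ (fun c => by simp [shiftC])
  rintro ⟨⟨x, y⟩, hxy⟩ hx
  simp only [shiftC]
  split_ifs with hab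
  · rw [hq _ _ ?_, zero_mul]
    by_contra hle
    exact hx ⟨⟨(x - a, y - b), by omega⟩, by simp only [Subtype.ext_iff, Prod.ext_iff]; omega⟩
  · rw [zero_mul]

end CoeffSums

theorem shiftC_sub (u v : ℕ) (a b : ℕ → ℕ → ℝ) :
    shiftC u v (a - b) = shiftC u v a - shiftC u v b := by
  ext k l
  simp only [shiftC, Pi.sub_apply]
  split_ifs <;> simp

theorem shiftC_monoC (a b u v : ℕ) : shiftC a b (monoC u v) = monoC (u + a) (v + b) := by
  ext k l
  simp only [shiftC, monoC]
  split_ifs <;> first | rfl | (exfalso; omega)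

section AugEntry

variable {d : ℕ} {β : ℕ → ℕ → ℝ} {B : Matrix (Idx d) (Jdx (d + 1)) ℝ}

theorem augEntry_of_le {k l i j : ℕ} (hr : k + l ≤ d) (hc : i + j ≤ d) :
    augEntry d β B k l i j = β (k + i) (l + j) := by
  rw [augEntry, dif_pos hr, if_pos hc]

theorem augEntry_of_eq {k l i j : ℕ} (hr : k + l ≤ d) (hc : i + j = d + 1) :
    augEntry d β B k l i j = B ⟨(k, l), hr⟩ ⟨(i, j), hc⟩ := by
  rw [augEntry, dif_pos hr, if_neg (by omega), dif_pos hc]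

theorem IsMomentBlock.augEntry_eq_beta (hB : IsMomentBlock d β B) {k l i j : ℕ}
    (hr : k + l ≤ d) (hc : i + j ≤ d + 1) (h : k + l + i + j ≤ 2 * d) :
    augEntry d β B k l i j = β (k + i) (l + j) := by
  rcases Nat.lt_or_ge d (i + j) with hlt | hle
  · rw [augEntry_of_eq hr (by omega), hB.1 _ _ (by dsimp only; omega)]
  · exact augEntry_of_le hr hle

theorem IsMomentBlock.augEntry_congr (hB : IsMomentBlock d β B) {k l i j k' l' i' j' : ℕ}
    (hr : k + l ≤ d) (hr' : k' + l' ≤ d) (hc : i + j ≤ d + 1) (hc' : i' + j' ≤ d + 1)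
    (hx : k + i = k' + i') (hy : l + j = l' + j') :
    augEntry d β B k l i j = augEntry d β B k' l' i' j' := by
  by_cases htop : k + l + i + j = 2 * d + 1
  · rw [augEntry_of_eq hr (by omega), augEntry_of_eq hr' (by omega)]
    exact hB.2 _ _ _ _ (by dsimp only; omega) (by dsimp only; omega) hx hy
  · rw [hB.augEntry_eq_beta hr hc (by omega), hB.augEntry_eq_beta hr' hc' (by omega), hx, hy]

theorem AugRel.augEntry_eq_sum {u v a b M : ℕ} {q : ℕ → ℕ → ℝ} (hq : DegLE q M)
    (huv : u + v + a + b ≤ d + 1) (hM : M + a + b ≤ d + 1)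
    (hrel : AugRel d β B (shiftC a b (monoC u v - q))) {k l : ℕ} (hr : k + l ≤ d) :
    augEntry d β B k l (u + a) (v + b) =
      ∑ c : Idx M, q c.1.1 c.1.2 * augEntry d β B k l (c.1.1 + a) (c.1.2 + b) := by
  have h := hrel k l hr
  simp only [shiftC_sub, shiftC_monoC, Pi.sub_apply, sub_mul, Finset.sum_sub_distrib] at h
  rwa [sum_monoC_mul (by omega), sum_shiftC_mul hM hq, sub_eq_zero] at h

end AugEntry

theorem statement16_general (d n m : ℕ) (β p q : ℕ → ℕ → ℝ)
    (hgen : GeneratedBy d n m β p q)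
    (B : Matrix (Idx d) (Jdx (d + 1)) ℝ)
    (hBold : ∀ (r : Idx d) (c : Jdx (d + 1)), r.1.1 + r.1.2 ≤ d - 1 →
      B r c = β (r.1.1 + c.1.1) (r.1.2 + c.1.2))
    (hBhankel : ∀ (r r' : Idx d) (c c' : Jdx (d + 1)),
      r.1.1 + r.1.2 = d → r'.1.1 + r'.1.2 = d →
      r.1.1 + c.1.1 = r'.1.1 + c'.1.1 → r.1.2 + c.1.2 = r'.1.2 + c'.1.2 →
      B r c = B r' c')
    (hrelY : ∀ a b : ℕ, m + a + b ≤ d + 1 → AugRel d β B (shiftC a b (monoC 0 m - q))) :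
    ∀ i j : ℕ, i + j ≤ d + 1 → ∀ f g : ℕ, m + f + g ≤ d →
      augEntry d β B f (m + g) i j =
        ∑ c : Idx m,
          q c.1.1 c.1.2 * augEntry d β B (c.1.1 + f) (c.1.2 + g) i j := by
  have hB : IsMomentBlock d β B := ⟨hBold, hBhankel⟩
  have hq : DegLE q m := hgen.2.2.2.2.2.1
  intro i j hij f g hfg
  -- shift the excess degree `s` of the entry from the row into the column
  set s := f + g + i + j - d with hs
  obtain ⟨a, b, k, l, hka, hlb, hkl, hab⟩ : ∃ a b k l : ℕ,
      k + a = f + i ∧ l + b = g + j ∧ k + l ≤ d ∧ m + a + b ≤ d + 1 :=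
    ⟨min s (f + i), s - min s (f + i), f + i - min s (f + i), g + j - (s - min s (f + i)),
      by omega⟩
  calc augEntry d β B f (m + g) i j
      = augEntry d β B k l (0 + a) (m + b) := by
        apply hB.augEntry_congr <;> omega
    _ = ∑ c : Idx m, q c.1.1 c.1.2 * augEntry d β B k l (c.1.1 + a) (c.1.2 + b) :=
        (hrelY a b hab).augEntry_eq_sum hq (by omega) hab hkl
    _ = ∑ c : Idx m, q c.1.1 c.1.2 * augEntry d β B (c.1.1 + f) (c.1.2 + g) i j := by
        refine Finset.sum_congr rfl fun c _ => ?_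
        have hc := c.2
        congr 1
        apply hB.augEntry_congr <;> omega

/-- Under the hypotheses of Theorem main, with
`q = Σ_{u+v ≤ m, v < m} b_{uv} x^u y^v`, the rows of `(M_d  B(d+1))` of the form
`X^fY^{m+g}` (`m + f + g ≤ d`) are recursively determined from row `Y^m`:
`⟨X^iY^j, X^fY^{m+g}⟩ = Σ_{u+v ≤ m, v < m} b_{uv} ⟨X^iY^j, X^{u+f}Y^{v+g}⟩` for all
`i + j ≤ d + 1`. -/
theorem statement16 (d n m : ℕ) (hd : 1 ≤ d) (β p q : ℕ → ℕ → ℝ)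
    (hpsd : (momentMatrix d β).PosSemidef)
    (hrg : RecursivelyGenerated d β)
    (hgen : GeneratedBy d n m β p q)
    (B : Matrix (Idx d) (Jdx (d + 1)) ℝ)
    (hBold : ∀ (r : Idx d) (c : Jdx (d + 1)), r.1.1 + r.1.2 ≤ d - 1 →
      B r c = β (r.1.1 + c.1.1) (r.1.2 + c.1.2))
    (hBhankel : ∀ (r r' : Idx d) (c c' : Jdx (d + 1)),
      r.1.1 + r.1.2 = d → r'.1.1 + r'.1.2 = d →
      r.1.1 + c.1.1 = r'.1.1 + c'.1.1 → r.1.2 + c.1.2 = r'.1.2 + c'.1.2 →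
      B r c = B r' c')
    (hrelX : ∀ a b : ℕ, n + a + b ≤ d + 1 → AugRel d β B (shiftC a b (monoC n 0 - p)))
    (hrelY : ∀ a b : ℕ, m + a + b ≤ d + 1 → AugRel d β B (shiftC a b (monoC 0 m - q))) :
    ∀ i j : ℕ, i + j ≤ d + 1 → ∀ f g : ℕ, m + f + g ≤ d →
      augEntry d β B f (m + g) i j =
        ∑ c : Idx m,
          q c.1.1 c.1.2 * augEntry d β B (c.1.1 + f) (c.1.2 + g) i j :=
  statement16_general d n m β p q hgen B hBold hBhankel hrelY
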